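/- arXiv:math/0506397 — 4 statements merged into one kernel-verified Lean document; each statement's English description precedes it below -/
import Mathlib

section
/- The abelianization of the braided Ptolemy–Thompson group T* is cyclic of order 6, i.e. Abelianization(T*) ≅ ℤ/6ℤ. -/
/-! The braided Ptolemy–Thompson group `T*` (presentation with generators α, β, σ),
the Ptolemy–Thompson group `T` (presentation with generators α, β), and the stable
braid group `B∞`. -/

-- Generators of T*: 0 ↦ α, 1 ↦ β, 2 ↦ σ
def TSα : FreeGroup (Fin 3) := FreeGroup.of 0
def TSβ : FreeGroup (Fin 3) := FreeGroup.of 1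
def TSσ : FreeGroup (Fin 3) := FreeGroup.of 2
/-- a = α²σ⁻¹ -/
def TSa : FreeGroup (Fin 3) := TSα^2 * TSσ⁻¹
def TSσ₁ : FreeGroup (Fin 3) := TSσ
def TSσ₂ : FreeGroup (Fin 3) := TSβ * TSσ * TSβ⁻¹
def TSσ₃ : FreeGroup (Fin 3) := TSβ⁻¹ * TSσ * TSβ

open scoped commutatorElement

/-- The fifteen defining relations of `T*`, written as relators. -/
def TstarRels : Set (FreeGroup (Fin 3)) :=
  { TSα * TSσ * (TSσ * TSα)⁻¹,                         -- (1) ασ = σα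
    TSα^4 * (TSσ^2)⁻¹,                                  -- (2) α⁴ = σ²
    TSβ^3,                                              -- (3) β³ = 1
    (TSβ*TSα)^5 * (TSσ*TSβ*TSσ*TSβ⁻¹*TSσ)⁻¹,            -- (4) (βα)⁵ = σβσβ⁻¹σ
    ⁅TSβ*TSα*TSβ, TSa*TSβ*TSα*TSβ*TSa⁆,                 -- (5)
    ⁅TSβ*TSα*TSβ, TSa*TSβ*TSa*TSβ*TSα*TSβ*TSa*TSβ*TSa⁆, -- (6)
    ⁅TSσ, TSβ*TSα*TSβ⁆,                                 -- (7)
    ⁅TSσ, TSβ*TSα*TSβ*TSa*TSβ⁻¹⁆,                       -- (8)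
    ⁅TSσ, TSβ*TSa*TSβ⁻¹*TSa*TSβ*TSα*TSβ*TSa*TSβ*TSa*TSβ⁻¹⁆, -- (9)
    ⁅TSσ, TSβ*TSa*TSβ*TSa*TSβ*TSα*TSβ*TSa*TSβ*TSa*TSβ⁆, -- (10)
    ⁅TSσ, TSβ*TSa*TSβ⁻¹*TSσ*(TSβ*TSa*TSβ⁻¹)⁻¹⁆,         -- (11)
    ⁅TSσ, TSβ*TSa*TSβ*TSa*TSβ⁻¹*TSσ*(TSβ*TSa*TSβ*TSa*TSβ⁻¹)⁻¹⁆, -- (12)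
    ⁅TSσ, TSβ*TSa*TSβ*TSa*TSβ*TSσ*(TSβ*TSa*TSβ*TSa*TSβ)⁻¹⁆,     -- (13)
    (TSσ₁*TSσ₂*TSσ₁) * (TSσ₂*TSσ₁*TSσ₂)⁻¹,              -- (14)
    (TSσ₁*TSσ₂*TSσ₃*TSσ₁) * (TSσ₂*TSσ₃*TSσ₁*TSσ₂)⁻¹,    -- (15a)
    (TSσ₂*TSσ₃*TSσ₁*TSσ₂) * (TSσ₃*TSσ₁*TSσ₂*TSσ₃)⁻¹ }   -- (15b)

/-- The braided Ptolemy–Thompson group `T*`. -/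
abbrev Tstar := PresentedGroup TstarRels


/-!
In the abelianization, relations (2)–(4) read `α⁴ = σ²`, `β³ = 1` and `β⁵α⁵ = σ³`, which force
`β = α²`, `σ = α⁵` and `α⁶ = 1`; so the abelianization is cyclic, generated by the class of `α`,
of order dividing 6. Conversely `α ↦ 1`, `β ↦ 2`, `σ ↦ 5` satisfies all fifteen relations in
`ℤ/6ℤ`, so the class of `α` has order exactly 6.
-/

open Multiplicative

theorem eq_sq_and_eq_pow_five_and_pow_six_eq_one {G : Type*} [CommGroup G] {x y s : G}
    (h₂ : x ^ 4 = s ^ 2) (h₃ : y ^ 3 = 1) (h₄ : (y * x) ^ 5 = s * y * s * y⁻¹ * s) :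
    y = x ^ 2 ∧ s = x ^ 5 ∧ x ^ 6 = 1 := by
  have h₂ := congrArg Additive.ofMul h₂
  have h₃ := congrArg Additive.ofMul h₃
  have h₄ := congrArg Additive.ofMul h₄
  simp only [ofMul_pow, ofMul_mul, ofMul_inv, ofMul_one] at h₂ h₃ h₄
  have hy : Additive.ofMul y = 2 • Additive.ofMul x := by
    linear_combination (norm := module) 2 • h₄ - 3 • h₂ - 3 • h₃
  have h₆ : 6 • Additive.ofMul x = 0 := by linear_combination (norm := module) h₃ - 3 • hy
  have hs : Additive.ofMul s = 5 • Additive.ofMul x := by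
    linear_combination (norm := module) h₄ - (2 : ℤ) • h₂ - 5 • hy - (2 : ℤ) • h₆
  exact ⟨by simpa using congrArg Additive.toMul hy, by simpa using congrArg Additive.toMul hs,
    by simpa using congrArg Additive.toMul h₆⟩

theorem PresentedGroup.abelianization_generated_by {α : Type*} {rels : Set (FreeGroup α)}
    (H : Subgroup (Abelianization (PresentedGroup rels)))
    (h : ∀ j, Abelianization.of (PresentedGroup.of j) ∈ H)
    (g : Abelianization (PresentedGroup rels)) : g ∈ H := by
  obtain ⟨g, rfl⟩ := QuotientGroup.mk_surjective g
  exact PresentedGroup.generated_by rels (H.comap Abelianization.of) h g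

theorem PresentedGroup.abelianization_of_mk_eq_one {α : Type*} {rels : Set (FreeGroup α)}
    {r : FreeGroup α} (hr : r ∈ rels) : Abelianization.of (PresentedGroup.mk rels r) = 1 := by
  rw [PresentedGroup.one_of_mem hr, map_one]

namespace Tstar

abbrev gen (i : Fin 3) : Abelianization Tstar := Abelianization.of (PresentedGroup.of i)

theorem gen_relations : gen 1 = gen 0 ^ 2 ∧ gen 2 = gen 0 ^ 5 ∧ gen 0 ^ 6 = 1 := by
  have rel {r : FreeGroup (Fin 3)} (hr : r ∈ TstarRels) :=
    PresentedGroup.abelianization_of_mk_eq_one hr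
  have h₂ := rel (r := TSα ^ 4 * (TSσ ^ 2)⁻¹) (by simp [TstarRels])
  have h₃ := rel (r := TSβ ^ 3) (by simp [TstarRels])
  have h₄ := rel (r := (TSβ * TSα) ^ 5 * (TSσ * TSβ * TSσ * TSβ⁻¹ * TSσ)⁻¹) (by simp [TstarRels])
  simp only [TSα, TSβ, TSσ, map_mul, map_inv, map_pow, mul_inv_eq_one] at h₂ h₃ h₄
  exact eq_sq_and_eq_pow_five_and_pow_six_eq_one h₂ h₃ h₄

def toZMod6 : Tstar →* Multiplicative (ZMod 6) :=
  PresentedGroup.toGroup (f := ![ofAdd 1, ofAdd 2, ofAdd 5]) <| by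
    intro r hr
    simp only [TstarRels, Set.mem_insert_iff, Set.mem_singleton_iff] at hr
    rcases hr with rfl | rfl | rfl | rfl | rfl | rfl | rfl | rfl | rfl | rfl | rfl | rfl | rfl |
      rfl | rfl | rfl <;>
    simp only [TSa, TSα, TSβ, TSσ, TSσ₁, TSσ₂, TSσ₃, commutatorElement_def, map_mul, map_inv,
      map_pow, FreeGroup.lift_apply_of] <;>
    decide

theorem orderOf_gen_zero : orderOf (gen 0) = 6 := by
  refine Nat.dvd_antisymm (orderOf_dvd_of_pow_eq_one gen_relations.2.2) ?_
  simpa [toZMod6, PresentedGroup.toGroup.of, orderOf_ofAdd_eq_addOrderOf, ZMod.addOrderOf_one]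
    using orderOf_map_dvd (Abelianization.lift toZMod6) (gen 0)

theorem mem_zpowers_gen_zero (g : Abelianization Tstar) : g ∈ Subgroup.zpowers (gen 0) := by
  refine PresentedGroup.abelianization_generated_by _ (fun j => ?_) g
  fin_cases j
  · exact Subgroup.mem_zpowers _
  · change gen 1 ∈ _
    exact gen_relations.1 ▸ Subgroup.npow_mem_zpowers _ 2
  · change gen 2 ∈ _
    exact gen_relations.2.1 ▸ Subgroup.npow_mem_zpowers _ 5

end Tstar

/-- The abelianization of the braided Ptolemy–Thompson group `T*`
is cyclic of order 6. -/
theorem abelianization_Tstar_iso_zmod6 :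
    Nonempty (Abelianization Tstar ≃* Multiplicative (ZMod 6)) := by
  have hcard : Nat.card (Abelianization Tstar) = 6 :=
    (orderOf_eq_card_of_forall_mem_zpowers Tstar.mem_zpowers_gen_zero).symm.trans
      Tstar.orderOf_gen_zero
  exact ⟨(zmodMulEquivOfGenerator Tstar.mem_zpowers_gen_zero hcard).symm⟩
end

section
/- The braided Ptolemy–Thompson group T* does not admit a left-invariant linear order (it is circularly orderable but, having torsion, cannot be left ordered). -/
open scoped commutatorElement

theorem eq_one_of_pow_eq_one_of_mulLeftMono {M : Type*} [Monoid M] [LinearOrder M]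
    [MulLeftMono M] {x : M} {n : ℕ} (hn : n ≠ 0) (h : x ^ n = 1) : x = 1 :=
  le_antisymm ((pow_le_one_iff hn).1 h.le) ((one_le_pow_iff hn).1 h.ge)

namespace Tstar

open Multiplicative

def toZMod3Gens : Fin 3 → Multiplicative (ZMod 3) := ![ofAdd 2, ofAdd 1, ofAdd 1]

theorem lift_toZMod3Gens_eq_one : ∀ r ∈ TstarRels, FreeGroup.lift toZMod3Gens r = 1 := by
  intro r hr
  simp only [TstarRels, Set.mem_insert_iff, Set.mem_singleton_iff] at hr
  rcases hr with rfl|rfl|rfl|rfl|rfl|rfl|rfl|rfl|rfl|rfl|rfl|rfl|rfl|rfl|rfl|rfl <;>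
    simp only [TSα, TSβ, TSσ, TSa, TSσ₁, TSσ₂, TSσ₃, commutatorElement_def, map_mul, map_inv,
      map_pow, FreeGroup.lift_apply_of] <;>
    decide

def toZMod3 : Tstar →* Multiplicative (ZMod 3) := PresentedGroup.toGroup lift_toZMod3Gens_eq_one

theorem mk_TSβ_ne_one : PresentedGroup.mk TstarRels TSβ ≠ 1 := fun h => by
  have h_image : toZMod3 (PresentedGroup.mk TstarRels TSβ) = ofAdd 1 :=
    PresentedGroup.toGroup.of _
  rw [h, map_one] at h_image
  exact absurd h_image (by decide)

theorem mk_TSβ_pow_three : PresentedGroup.mk TstarRels TSβ ^ 3 = 1 := by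
  rw [← map_pow]
  exact PresentedGroup.one_of_mem (by simp [TstarRels])

end Tstar

/-- `T*` does not admit a left-invariant linear order. -/
theorem Tstar_not_left_orderable :
    ¬ ∃ inst : LinearOrder Tstar, ∀ g a b : Tstar,
        (letI := inst
         a ≤ b → g * a ≤ g * b) := by
  rintro ⟨inst, h_mono⟩
  have : MulLeftMono Tstar := ⟨fun g _ _ hab => h_mono g _ _ hab⟩
  exact Tstar.mk_TSβ_ne_one
    (eq_one_of_pow_eq_one_of_mulLeftMono three_ne_zero Tstar.mk_TSβ_pow_three)
end

section
/- Let 1 → K → G → H → 1 be a short exact sequence of groups (i.e. there is a surjective homomorphism p : G → H with kernel K). If K admits a left-invariant linear order and H admits a left-invariant circular order, then G admits a left-invariant circular order. -/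
set_option linter.unusedSectionVars false

section co9aux

variable {G H : Type*} [Group G] [Group H] (p : G →* H)

section klt
variable [LinearOrder ↥p.ker]

/-- `a` is "below" `b` within its fiber: `b⁻¹ * a` lies in the kernel and is `< 1`. -/
def co9klt (a b : G) : Prop := ∃ h : b⁻¹ * a ∈ p.ker, (⟨b⁻¹ * a, h⟩ : p.ker) < 1

lemma co9mul_lt (hKinv : ∀ g a b : ↥p.ker, a ≤ b → g * a ≤ g * b)
    (g : ↥p.ker) {a b : ↥p.ker} (h : a < b) : g * a < g * b :=
  lt_of_le_of_ne (hKinv g a b h.le) (fun e => absurd (mul_left_cancel e) h.ne)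

lemma co9klt_p {a b : G} (h : co9klt p a b) : p a = p b := by
  obtain ⟨hm, -⟩ := h
  have h2 : p (b⁻¹ * a) = 1 := MonoidHom.mem_ker.mp hm
  rw [map_mul, map_inv] at h2
  exact (inv_mul_eq_one.mp h2).symm

lemma co9klt_trans (hKinv : ∀ g a b : ↥p.ker, a ≤ b → g * a ≤ g * b)
    {a b c : G} (hab : co9klt p a b) (hbc : co9klt p b c) : co9klt p a c := by
  obtain ⟨h1, l1⟩ := hab
  obtain ⟨h2, l2⟩ := hbc
  have hmem : c⁻¹ * a ∈ p.ker := by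
    have := mul_mem h2 h1
    simpa [mul_assoc] using this
  refine ⟨hmem, ?_⟩
  have key : (⟨c⁻¹ * a, hmem⟩ : ↥p.ker) = ⟨c⁻¹ * b, h2⟩ * ⟨b⁻¹ * a, h1⟩ := by
    ext
    simp [mul_assoc]
  rw [key]
  calc (⟨c⁻¹ * b, h2⟩ : ↥p.ker) * ⟨b⁻¹ * a, h1⟩
      < ⟨c⁻¹ * b, h2⟩ * 1 := co9mul_lt p hKinv _ l1
    _ = ⟨c⁻¹ * b, h2⟩ := mul_one _
    _ < 1 := l2

lemma co9klt_asymm (hKinv : ∀ g a b : ↥p.ker, a ≤ b → g * a ≤ g * b)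
    {a b : G} (hab : co9klt p a b) : ¬ co9klt p b a := by
  intro hba
  obtain ⟨h, l⟩ := co9klt_trans p hKinv hab hba
  have e : (⟨a⁻¹ * a, h⟩ : ↥p.ker) = 1 := by ext; simp
  rw [e] at l
  exact lt_irrefl _ l

lemma co9klt_irrefl (hKinv : ∀ g a b : ↥p.ker, a ≤ b → g * a ≤ g * b)
    (a : G) : ¬ co9klt p a a := fun h => co9klt_asymm p hKinv h h

lemma co9klt_total (hKinv : ∀ g a b : ↥p.ker, a ≤ b → g * a ≤ g * b)
    {a b : G} (hpe : p a = p b) (hne : a ≠ b) :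
    co9klt p a b ∨ co9klt p b a := by
  have h1 : b⁻¹ * a ∈ p.ker := by simp [MonoidHom.mem_ker, hpe]
  have h2 : a⁻¹ * b ∈ p.ker := by simp [MonoidHom.mem_ker, hpe]
  have hm1 : (⟨b⁻¹ * a, h1⟩ : ↥p.ker) ≠ 1 := by
    intro e
    apply hne
    have e' : b⁻¹ * a = 1 := congrArg Subtype.val e
    exact (inv_mul_eq_one.mp e').symm
  rcases lt_trichotomy (⟨b⁻¹ * a, h1⟩ : ↥p.ker) 1 with h | h | h
  · exact Or.inl ⟨h1, h⟩
  · exact absurd h hm1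
  · right
    refine ⟨h2, ?_⟩
    have inv_eq : (⟨a⁻¹ * b, h2⟩ : ↥p.ker) = (⟨b⁻¹ * a, h1⟩ : ↥p.ker)⁻¹ := by
      ext; simp
    rw [inv_eq]
    have := co9mul_lt p hKinv (⟨b⁻¹ * a, h1⟩ : ↥p.ker)⁻¹ h
    simpa using this

lemma co9klt_smul (g : G) {a b : G} (h : co9klt p a b) : co9klt p (g * a) (g * b) := by
  unfold co9klt at h ⊢
  rw [show (g * b)⁻¹ * (g * a) = b⁻¹ * a by group]
  exact h

end klt

/-- cyclic-from-linear on a triple. -/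
def co9cyc (r : G → G → Prop) (a b c : G) : Prop :=
  (r a b ∧ r b c) ∨ (r b c ∧ r c a) ∨ (r c a ∧ r a b)

lemma co9cyc_trans {r : G → G → Prop} (tr : ∀ {a b c}, r a b → r b c → r a c)
    (as : ∀ {a b}, r a b → ¬ r b a) {a b c d : G}
    (h1 : co9cyc r a b c) (h2 : co9cyc r b d c) : co9cyc r a d c := by
  obtain ⟨hab, hbc⟩ | ⟨hbc, hca⟩ | ⟨hca, hab⟩ := h1 <;>
    obtain ⟨hbd, hdc⟩ | ⟨hdc, hcb⟩ | ⟨hcb, hbd⟩ := h2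
  · exact Or.inl ⟨tr hab hbd, hdc⟩
  · exact absurd hbc (as hcb)
  · exact absurd hbc (as hcb)
  · exact Or.inr (Or.inl ⟨hdc, hca⟩)
  · exact absurd hbc (as hcb)
  · exact absurd hbc (as hcb)
  · exact Or.inl ⟨tr hab hbd, hdc⟩
  · exact Or.inr (Or.inl ⟨hdc, hca⟩)
  · exact Or.inr (Or.inr ⟨hca, tr hab hbd⟩)

lemma co9cyc_total {r : G → G → Prop} {a b c : G}
    (hab : r a b ∨ r b a) (hbc : r b c ∨ r c b) (hca : r c a ∨ r a c) :
    co9cyc r a b c ∨ co9cyc r c b a := by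
  rcases hab with hab | hba <;> rcases hbc with hbc | hcb <;> rcases hca with hca | hac
  · exact Or.inl (Or.inl ⟨hab, hbc⟩)
  · exact Or.inl (Or.inl ⟨hab, hbc⟩)
  · exact Or.inl (Or.inr (Or.inr ⟨hca, hab⟩))
  · exact Or.inr (Or.inr (Or.inr ⟨hac, hcb⟩))
  · exact Or.inl (Or.inr (Or.inl ⟨hbc, hca⟩))
  · exact Or.inr (Or.inr (Or.inl ⟨hba, hac⟩))
  · exact Or.inr (Or.inl ⟨hcb, hba⟩)
  · exact Or.inr (Or.inl ⟨hcb, hba⟩)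

section H

variable [CO : CircularOrder H]

lemma co9sbtw_ne12 {x y z : H} (h : sbtw x y z) : x ≠ y := by
  rintro rfl; exact sbtw_irrefl_left h

lemma co9sbtw_ne23 {x y z : H} (h : sbtw x y z) : y ≠ z := by
  rintro rfl; exact sbtw_irrefl_right h

lemma co9sbtw_ne13 {x y z : H} (h : sbtw x y z) : x ≠ z := by
  rintro rfl; exact sbtw_irrefl_left_right h

lemma co9sbtw_total {x y z : H} (h12 : x ≠ y) (h23 : y ≠ z) (h13 : x ≠ z) :
    sbtw x y z ∨ sbtw z y x := by
  by_cases h : btw z y x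
  · right
    rw [sbtw_iff_not_btw]
    intro h'
    rcases btw_antisymm h' h with e | e | e
    · exact h12 e
    · exact h23 e
    · exact h13 e.symm
  · exact Or.inl (sbtw_iff_not_btw.mpr h)

variable [LinearOrder ↥p.ker]

/-- The strict circular betweenness relation on `G`. -/
def co9S (a b c : G) : Prop :=
  sbtw (p a) (p b) (p c)
  ∨ (p a = p b ∧ co9klt p a b ∧ p b ≠ p c)
  ∨ (p b = p c ∧ co9klt p b c ∧ p c ≠ p a)
  ∨ (p c = p a ∧ co9klt p c a ∧ p a ≠ p b)
  ∨ (p a = p b ∧ p b = p c ∧ co9cyc (co9klt p) a b c)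

lemma co9S_cyclic {a b c : G} (h : co9S p a b c) : co9S p b c a := by
  obtain h | ⟨e, k, n⟩ | ⟨e, k, n⟩ | ⟨e, k, n⟩ | ⟨e1, e2, cy⟩ := h
  · exact Or.inl (sbtw_cyclic_left h)
  · exact Or.inr (Or.inr (Or.inr (Or.inl ⟨e, k, n⟩)))
  · exact Or.inr (Or.inl ⟨e, k, n⟩)
  · exact Or.inr (Or.inr (Or.inl ⟨e, k, n⟩))
  · refine Or.inr (Or.inr (Or.inr (Or.inr ⟨e2, (e1.trans e2).symm, ?_⟩)))
    obtain h | h | h := cy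
    · exact Or.inr (Or.inr h)
    · exact Or.inl h
    · exact Or.inr (Or.inl h)

lemma co9S_not_aac (hKinv : ∀ g a b : ↥p.ker, a ≤ b → g * a ≤ g * b)
    (a c : G) : ¬ co9S p a a c := by
  rintro (h | ⟨e, k, n⟩ | ⟨e, k, n⟩ | ⟨e, k, n⟩ | ⟨e1, e2, cy⟩)
  · exact co9sbtw_ne12 h rfl
  · exact co9klt_irrefl p hKinv a k
  · exact n e.symm
  · exact n rfl
  · obtain ⟨x1, x2⟩ | ⟨x1, x2⟩ | ⟨x1, x2⟩ := cy
    · exact co9klt_irrefl p hKinv a x1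
    · exact co9klt_asymm p hKinv x1 x2
    · exact co9klt_irrefl p hKinv a x2

lemma co9S_trans (hKinv : ∀ g a b : ↥p.ker, a ≤ b → g * a ≤ g * b)
    {a b c d : G} (h1 : co9S p a b c) (h2 : co9S p b d c) :
    co9S p a d c := by
  have ktr : ∀ {u v w : G}, co9klt p u v → co9klt p v w → co9klt p u w :=
    fun h h' => co9klt_trans p hKinv h h'
  have kas : ∀ {u v : G}, co9klt p u v → ¬ co9klt p v u :=
    fun h => co9klt_asymm p hKinv h
  obtain hA | ⟨eA, kA, nA⟩ | ⟨eA, kA, nA⟩ | ⟨eA, kA, nA⟩ | ⟨eA1, eA2, cyA⟩ := h1 <;>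
    obtain hB | ⟨eB, kB, nB⟩ | ⟨eB, kB, nB⟩ | ⟨eB, kB, nB⟩ | ⟨eB1, eB2, cyB⟩ := h2
  -- A1 : sbtw (p a) (p b) (p c)
  · exact Or.inl (sbtw_trans_left hA hB)
  · exact Or.inl (eB ▸ hA)
  · exact Or.inr (Or.inr (Or.inl ⟨eB, kB, (co9sbtw_ne13 hA).symm⟩))
  · exact absurd eB.symm (co9sbtw_ne23 hA)
  · exact absurd (eB1.trans eB2) (co9sbtw_ne23 hA)
  -- A2 : p a = p b, klt a b, p b ≠ p c
  · exact Or.inl (by rw [eA]; exact hB)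
  · exact Or.inr (Or.inl ⟨eA.trans eB, ktr kA kB, nB⟩)
  · exact Or.inr (Or.inr (Or.inl ⟨eB, kB, fun e => nA (eA.symm.trans e.symm)⟩))
  · exact absurd eB.symm nA
  · exact absurd (eB1.trans eB2) nA
  -- A3 : p b = p c, klt b c, p c ≠ p a
  · exact absurd eA (co9sbtw_ne13 hB)
  · exact absurd (eB.symm.trans eA) nB
  · exact absurd eA.symm nB
  · exact absurd kA (kas kB)
  · obtain ⟨x1, x2⟩ | ⟨x1, x2⟩ | ⟨x1, x2⟩ := cyB
    · exact Or.inr (Or.inr (Or.inl ⟨eB2, x2, nA⟩))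
    · exact absurd kA (kas x2)
    · exact absurd kA (kas x1)
  -- A4 : p c = p a, klt c a, p a ≠ p b
  · exact Or.inr (Or.inr (Or.inr (Or.inl
      ⟨eA, kA, fun e => (co9sbtw_ne23 hB) (e.symm.trans eA.symm)⟩)))
  · exact Or.inr (Or.inr (Or.inr (Or.inl ⟨eA, kA, fun e => nA (e.trans eB.symm)⟩)))
  · exact Or.inr (Or.inr (Or.inr (Or.inr
      ⟨eA.symm.trans eB.symm, eB, Or.inr (Or.inl ⟨kB, kA⟩)⟩)))
  · exact absurd (eA.symm.trans eB) nA
  · exact absurd (eA.symm.trans (eB1.trans eB2).symm) nA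
  -- A5 : all in one fiber, cyc a b c
  · exact absurd eA2 (co9sbtw_ne13 hB)
  · exact absurd (eB.symm.trans eA2) nB
  · exact absurd eA2.symm nB
  · obtain ⟨x1, x2⟩ | ⟨x1, x2⟩ | ⟨x1, x2⟩ := cyA
    · exact absurd x2 (kas kB)
    · exact absurd x1 (kas kB)
    · exact Or.inr (Or.inr (Or.inr (Or.inl
        ⟨(eA1.trans eA2).symm, x1, fun e => nB (eA1.symm.trans e)⟩)))
  · exact Or.inr (Or.inr (Or.inr (Or.inr
      ⟨eA1.trans eB1, eB2,
        co9cyc_trans (r := co9klt p) (fun h h' => ktr h h') (fun h => kas h) cyA cyB⟩)))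

lemma co9S_asymm (hKinv : ∀ g a b : ↥p.ker, a ≤ b → g * a ≤ g * b)
    {a b c : G} (h1 : co9S p a b c) (h2 : co9S p c b a) : False :=
  co9S_not_aac p hKinv a c (co9S_trans p hKinv h1 (co9S_cyclic p h2))

lemma co9S_total (hKinv : ∀ g a b : ↥p.ker, a ≤ b → g * a ≤ g * b)
    {a b c : G} (hab : a ≠ b) (hbc : b ≠ c) (hca : c ≠ a) :
    co9S p a b c ∨ co9S p c b a := by
  by_cases e1 : p a = p b <;> by_cases e2 : p b = p c
  · -- all in one fiber
    have e3 : p c = p a := (e1.trans e2).symm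
    rcases co9cyc_total (r := co9klt p)
        (co9klt_total p hKinv e1 hab) (co9klt_total p hKinv e2 hbc)
        (co9klt_total p hKinv e3 hca) with h | h
    · exact Or.inl (Or.inr (Or.inr (Or.inr (Or.inr ⟨e1, e2, h⟩))))
    · exact Or.inr (Or.inr (Or.inr (Or.inr (Or.inr ⟨e2.symm, e1.symm, h⟩))))
  · -- p a = p b, p b ≠ p c
    rcases co9klt_total p hKinv e1 hab with h | h
    · exact Or.inl (Or.inr (Or.inl ⟨e1, h, e2⟩))
    · exact Or.inr (Or.inr (Or.inr (Or.inl ⟨e1.symm, h, fun e => e2 (e1.symm.trans e)⟩)))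
  · -- p b = p c, p a ≠ p b
    rcases co9klt_total p hKinv e2 hbc with h | h
    · exact Or.inl (Or.inr (Or.inr (Or.inl ⟨e2, h, fun e => e1 (e2.trans e).symm⟩)))
    · exact Or.inr (Or.inr (Or.inl ⟨e2.symm, h, fun e => e1 e.symm⟩))
  · by_cases e3 : p c = p a
    · rcases co9klt_total p hKinv e3 hca with h | h
      · exact Or.inl (Or.inr (Or.inr (Or.inr (Or.inl ⟨e3, h, e1⟩))))
      · exact Or.inr (Or.inr (Or.inr (Or.inr (Or.inl ⟨e3.symm, h, fun e => e2 e.symm⟩))))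
    · rcases co9sbtw_total (fun e => e1 e) (fun e => e2 e) (fun e => e3 e.symm) with h | h
      · exact Or.inl (Or.inl h)
      · exact Or.inr (Or.inl h)

lemma co9S_smul (g : G) {a b c : G} (h : co9S p a b c)
    (hHinv : ∀ g' x y z : H, sbtw x y z → sbtw (g' * x) (g' * y) (g' * z)) :
    co9S p (g * a) (g * b) (g * c) := by
  have pe : ∀ u v : G, p u = p v → p (g * u) = p (g * v) := by
    intro u v e; rw [map_mul, map_mul, e]
  have pne : ∀ u v : G, p u ≠ p v → p (g * u) ≠ p (g * v) := by
    intro u v e e'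
    rw [map_mul, map_mul] at e'
    exact e (mul_left_cancel e')
  obtain h | ⟨e, k, n⟩ | ⟨e, k, n⟩ | ⟨e, k, n⟩ | ⟨e1, e2, cy⟩ := h
  · left
    rw [map_mul, map_mul, map_mul]
    exact hHinv (p g) _ _ _ h
  · exact Or.inr (Or.inl ⟨pe _ _ e, co9klt_smul p g k, pne _ _ n⟩)
  · exact Or.inr (Or.inr (Or.inl ⟨pe _ _ e, co9klt_smul p g k, pne _ _ n⟩))
  · exact Or.inr (Or.inr (Or.inr (Or.inl ⟨pe _ _ e, co9klt_smul p g k, pne _ _ n⟩)))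
  · refine Or.inr (Or.inr (Or.inr (Or.inr ⟨pe _ _ e1, pe _ _ e2, ?_⟩)))
    obtain ⟨x1, x2⟩ | ⟨x1, x2⟩ | ⟨x1, x2⟩ := cy
    · exact Or.inl ⟨co9klt_smul p g x1, co9klt_smul p g x2⟩
    · exact Or.inr (Or.inl ⟨co9klt_smul p g x1, co9klt_smul p g x2⟩)
    · exact Or.inr (Or.inr ⟨co9klt_smul p g x1, co9klt_smul p g x2⟩)

end H

end co9aux

/-- if `1 → K → G → H → 1` is a short exact sequence of groups
(`p : G → H` surjective with kernel `K = p.ker`), `K` admits a left-invariant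
linear order and `H` admits a left-invariant circular order, then `G` admits a
left-invariant circular order. -/
theorem circularOrderable_of_extension {G H : Type*} [Group G] [Group H]
    (p : G →* H) (hsurj : Function.Surjective p)
    (hK : ∃ instK : LinearOrder p.ker, ∀ g a b : p.ker,
      (letI := instK
       a ≤ b → g * a ≤ g * b))
    (hH : ∃ instH : CircularOrder H, ∀ g a b c : H,
      (letI := instH
       sbtw a b c → sbtw (g * a) (g * b) (g * c))) :
    ∃ instG : CircularOrder G, ∀ g a b c : G,
      (letI := instG
       sbtw a b c → sbtw (g * a) (g * b) (g * c)) := by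
  obtain ⟨instK, hKinv⟩ := hK
  obtain ⟨instH, hHinv⟩ := hH
  letI := instK
  letI := instH
  have hKinv' : ∀ g a b : ↥p.ker, a ≤ b → g * a ≤ g * b := hKinv
  have hHinv' : ∀ g a b c : H, sbtw a b c → sbtw (g * a) (g * b) (g * c) := hHinv
  refine ⟨{
    btw := fun a b c => ¬ co9S p c b a
    sbtw := co9S p
    btw_refl := fun a => co9S_not_aac p hKinv' a a
    btw_cyclic_left := ?_
    sbtw_iff_btw_not_btw := ?_
    sbtw_trans_left := fun h h' => co9S_trans p hKinv' h h'
    btw_antisymm := ?_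
    btw_total := ?_ }, ?_⟩
  · intro a b c h h'
    exact h (co9S_cyclic p h')
  · intro a b c
    constructor
    · intro h
      exact ⟨fun h' => co9S_asymm p hKinv' h h', fun h' => h' h⟩
    · rintro ⟨-, h2⟩
      by_contra h
      exact h2 h
  · intro a b c h1 h2
    by_contra hcon
    push_neg at hcon
    obtain ⟨n1, n2, n3⟩ := hcon
    rcases co9S_total p hKinv' n1 n2 n3 with h | h
    · exact h2 h
    · exact h1 h
  · intro a b c
    by_cases h : co9S p c b a
    · exact Or.inr (fun h' => co9S_asymm p hKinv' h' h)
    · exact Or.inl h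
  · intro g a b c h
    exact co9S_smul p g h hHinv'
end

section
/- Let p : G → H be a surjective group homomorphism whose kernel K carries a left-invariant linear order <, and let H carry a left-invariant circular order with orientation cocycle c_H : H³ → ℤ (c_H(a,b,c) = 1 if (a,b,c) is strictly positively oriented, −1 if strictly negatively oriented, 0 if two of a, b, c coincide). Equip G with the circular order defined as follows, with orientation cocycle c_G : G³ → ℤ: for pairwise distinct g₀, g₁, g₂ ∈ G, (i) if p(g₀), p(g₁), p(g₂) are pairwise distinct then c_G(g₀,g₁,g₂) = c_H(p(g₀),p(g₁),p(g₂)); (ii) if p(g₀) = p(g₁) ≠ p(g₂) then c_G(g₀,g₁,g₂) = 1 if g₀⁻¹g₁ > 1 and −1 if g₀⁻¹g₁ < 1, and the cases p(g₁) = p(g₂) ≠ p(g₀) and p(g₀) = p(g₂) ≠ p(g₁) are determined by cyclic invariance c_G(g₀,g₁,g₂) = c_G(g₁,g₂,g₀); (iii) if p(g₀) = p(g₁) = p(g₂) then c_G(g₀,g₁,g₂) = 1 if the triple (1, g₀⁻¹g₁, g₀⁻¹g₂) satisfies 1 < g₀⁻¹g₁ < g₀⁻¹g₂ or g₀⁻¹g₂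 < 1 < g₀⁻¹g₁ or g₀⁻¹g₁ < g₀⁻¹g₂ < 1, and c_G(g₀,g₁,g₂) = −1 otherwise; and c_G(g₀,g₁,g₂) = 0 whenever two of g₀, g₁, g₂ coincide. Define w : G × G → ℤ by w(g₀,g₁) = 0 if p(g₀) ≠ p(g₁) or g₀ = g₁; w(g₀,g₁) = 1 if p(g₀) = p(g₁), g₀ ≠ g₁ and g₀⁻¹g₁ > 1; w(g₀,g₁) = −1 if p(g₀) = p(g₁) and g₀⁻¹g₁ < 1. Then for all g₀, g₁, g₂ ∈ G: c_G(g₀,g₁,g₂) − c_H(p(g₀),p(g₁),p(g₂)) = w(g₁,g₂) − w(g₀,g₂) + w(g₀,g₁). In particular, the difference of the order cocycle of G and the pull-back of the order cocycle of H is a coboundary. -/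
/-- The orientation cocycle of a circular order: `1` on strictly positively
oriented triples, `-1` on strictly negatively oriented triples, `0` when two
entries coincide. -/
noncomputable def orientCocycle {H : Type*} [CircularOrder H] (a b c : H) : ℤ :=
  open Classical in
  if sbtw a b c then 1 else if sbtw c b a then -1 else 0

/-- If `p g₀ = p g₁`, then `g₀⁻¹ g₁` is an element of the kernel of `p`. -/
def kerElt {G H : Type*} [Group G] [Group H] (p : G →* H) (g₀ g₁ : G)
    (h : p g₀ = p g₁) : p.ker :=
  ⟨g₀⁻¹ * g₁, by simp [MonoidHom.mem_ker, h]⟩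

/-- The 1-cochain `w` on `G`: `w(g₀,g₁) = 0` if `p g₀ ≠ p g₁` or `g₀ = g₁`;
`1` if `p g₀ = p g₁`, `g₀ ≠ g₁` and `g₀⁻¹ g₁ > 1` in the kernel; `-1` if
`p g₀ = p g₁` and `g₀⁻¹ g₁ < 1`. -/
noncomputable def wCochain {G H : Type*} [Group G] [Group H] (p : G →* H)
    [LinearOrder p.ker] (g₀ g₁ : G) : ℤ :=
  open Classical in
  if h : p g₀ = p g₁ then
    if g₀ = g₁ then 0
    else if 1 < kerElt p g₀ g₁ h then 1 else -1
  else 0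

/-- The orientation cocycle `c_G` of the circular order on `G` built from a
left-invariant linear order on `ker p` and a left-invariant circular order
on `H`: cases (i), (ii) (with its cyclic variants) and (iii) of the statement,
and `0` on degenerate triples. -/
noncomputable def cOrderG {G H : Type*} [Group G] [Group H] (p : G →* H)
    [LinearOrder p.ker] [CircularOrder H] (g₀ g₁ g₂ : G) : ℤ :=
  open Classical in
  if g₀ = g₁ ∨ g₁ = g₂ ∨ g₀ = g₂ then 0
  else if h01 : p g₀ = p g₁ then
    if h12 : p g₁ = p g₂ then
      -- case (iii): p g₀ = p g₁ = p g₂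
      if (1 < kerElt p g₀ g₁ h01 ∧
            kerElt p g₀ g₁ h01 < kerElt p g₀ g₂ (h01.trans h12)) ∨
         (kerElt p g₀ g₂ (h01.trans h12) < 1 ∧ 1 < kerElt p g₀ g₁ h01) ∨
         (kerElt p g₀ g₁ h01 < kerElt p g₀ g₂ (h01.trans h12) ∧
            kerElt p g₀ g₂ (h01.trans h12) < 1)
      then 1 else -1
    else -- case (ii): p g₀ = p g₁ ≠ p g₂
      if 1 < kerElt p g₀ g₁ h01 then 1 else -1
  else if h12 : p g₁ = p g₂ then
    -- case (ii), cyclic variant: p g₁ = p g₂ ≠ p g₀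
    if 1 < kerElt p g₁ g₂ h12 then 1 else -1
  else if h20 : p g₂ = p g₀ then
    -- case (ii), cyclic variant: p g₀ = p g₂ ≠ p g₁
    if 1 < kerElt p g₂ g₀ h20 then 1 else -1
  else -- case (i): pairwise distinct images
    orientCocycle (p g₀) (p g₁) (p g₂)

lemma orientCocycle_eq_zero' {H : Type*} [CircularOrder H] {a b c : H}
    (h : a = b ∨ b = c ∨ a = c) : orientCocycle a b c = 0 := by
  rcases h with rfl | rfl | rfl <;>
    simp [orientCocycle, sbtw_irrefl_left, sbtw_irrefl_right, sbtw_irrefl_left_right]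

lemma kerElt_inv' {G H : Type*} [Group G] [Group H] (p : G →* H) (a b : G) (h : p a = p b) :
    (kerElt p a b h)⁻¹ = kerElt p b a h.symm := by
  ext; simp [kerElt, mul_inv_rev]

lemma kerElt_eq_one_iff' {G H : Type*} [Group G] [Group H] (p : G →* H) (a b : G)
    (h : p a = p b) : kerElt p a b h = 1 ↔ a = b := by
  simp [kerElt, Subtype.ext_iff, inv_mul_eq_one]

lemma kerElt_split' {G H : Type*} [Group G] [Group H] (p : G →* H) (g₀ g₁ g₂ : G)
    (h01 : p g₀ = p g₁) (h12 : p g₁ = p g₂) :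
    kerElt p g₁ g₂ h12 = (kerElt p g₀ g₁ h01)⁻¹ * kerElt p g₀ g₂ (h01.trans h12) := by
  ext; simp [kerElt, mul_inv_rev, mul_assoc]

/-- for a surjection `p : G → H` with a left-invariant linear
order on `ker p` and a left-invariant circular order on `H`, the difference of
the orientation cocycle `c_G` of the induced circular order on `G` and the
pull-back of the orientation cocycle `c_H` of `H` is the coboundary of `w`. -/
theorem cOrderG_sub_pullback_eq_coboundary {G H : Type*} [Group G] [Group H]
    (p : G →* H) (hsurj : Function.Surjective p)
    [LinearOrder p.ker] (hK : ∀ g a b : p.ker, a ≤ b → g * a ≤ g * b)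
    [CircularOrder H] (hH : ∀ g a b c : H, sbtw a b c → sbtw (g*a) (g*b) (g*c)) :
    ∀ g₀ g₁ g₂ : G,
      cOrderG p g₀ g₁ g₂ - orientCocycle (p g₀) (p g₁) (p g₂)
        = wCochain p g₁ g₂ - wCochain p g₀ g₂ + wCochain p g₀ g₁ := by
  have hlt : ∀ g a b : p.ker, a < b → g * a < g * b := fun g a b h =>
    lt_of_le_of_ne (hK g a b h.le) fun e => h.ne (mul_left_cancel e)
  have hlt_iff : ∀ g a b : p.ker, a < b ↔ g * a < g * b := fun g a b =>
    ⟨hlt g a b, fun h => by simpa using hlt g⁻¹ (g * a) (g * b) h⟩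
  have hmul : ∀ x y : p.ker, 1 < x⁻¹ * y ↔ x < y := fun x y => by
    simpa using (hlt_iff x 1 (x⁻¹ * y))
  have hinv' : ∀ x : p.ker, 1 < x⁻¹ ↔ x < 1 := fun x => by
    simpa using hmul x 1
  intro g₀ g₁ g₂
  by_cases e01 : g₀ = g₁
  · subst e01
    simp [cOrderG, wCochain, orientCocycle_eq_zero' (Or.inl rfl)]
  by_cases e12 : g₁ = g₂
  · subst e12
    simp [cOrderG, wCochain, orientCocycle_eq_zero' (Or.inr (Or.inl rfl))]
  by_cases e02 : g₀ = g₂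
  · subst e02
    rw [cOrderG, if_pos (Or.inr (Or.inr rfl)),
      orientCocycle_eq_zero' (Or.inr (Or.inr rfl))]
    by_cases h01 : p g₀ = p g₁
    · have h10 : p g₁ = p g₀ := h01.symm
      rw [wCochain, dif_pos h10, if_neg (Ne.symm e01), wCochain, dif_pos rfl, if_pos rfl,
        wCochain, dif_pos h01, if_neg e01]
      have hxi : kerElt p g₁ g₀ h10 = (kerElt p g₀ g₁ h01)⁻¹ := (kerElt_inv' p g₀ g₁ h01).symm
      rw [hxi]
      have hx1 : kerElt p g₀ g₁ h01 ≠ 1 := fun h => e01 ((kerElt_eq_one_iff' p g₀ g₁ h01).mp h)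
      rcases hx1.lt_or_gt with hv | hv <;>
        simp [hinv' (kerElt p g₀ g₁ h01), hv, hv.not_gt]
    · rw [wCochain, dif_neg (fun h => h01 h.symm), wCochain, dif_pos rfl, if_pos rfl,
        wCochain, dif_neg h01]
      ring
  rw [cOrderG, if_neg (by tauto)]
  by_cases h01 : p g₀ = p g₁
  · by_cases h12 : p g₁ = p g₂
    · have h02 : p g₀ = p g₂ := h01.trans h12
      rw [dif_pos h01, dif_pos h12, orientCocycle_eq_zero' (Or.inl h01),
        wCochain, dif_pos h12, if_neg e12, wCochain, dif_pos h02, if_neg e02,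
        wCochain, dif_pos h01, if_neg e01]
      set x := kerElt p g₀ g₁ h01 with hxdef
      set y := kerElt p g₀ g₂ h02 with hydef
      set z := kerElt p g₁ g₂ h12 with hzdef
      have hz : z = x⁻¹ * y := kerElt_split' p g₀ g₁ g₂ h01 h12
      have hzx : (1 < z) ↔ x < y := by rw [hz]; exact hmul x y
      have hx1 : x ≠ 1 := fun h => e01 ((kerElt_eq_one_iff' p g₀ g₁ h01).mp h)
      have hy1 : y ≠ 1 := fun h => e02 ((kerElt_eq_one_iff' p g₀ g₂ h02).mp h)
      have hxy : x ≠ y := fun h => e12 ((kerElt_eq_one_iff' p g₁ g₂ h12).mp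
        (by rw [← hzdef, hz, h, inv_mul_cancel]))
      rcases hx1.lt_or_gt with hx | hx <;> rcases hy1.lt_or_gt with hy | hy <;>
        rcases hxy.lt_or_gt with hw | hw <;>
          first
            | exact absurd hy (hw.trans hx).not_gt
            | exact absurd hx (hw.trans hy).not_gt
            | simp [hzx, hx, hy, hw, hx.not_gt, hy.not_gt, hw.not_gt]
    · have h02 : ¬ p g₀ = p g₂ := fun h => h12 (h01.symm.trans h)
      rw [dif_pos h01, dif_neg h12, orientCocycle_eq_zero' (Or.inl h01),
        wCochain, dif_neg h12, wCochain, dif_neg h02, wCochain, dif_pos h01, if_neg e01]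
      ring
  · by_cases h12 : p g₁ = p g₂
    · have h02 : ¬ p g₀ = p g₂ := fun h => h01 (h.trans h12.symm)
      rw [dif_neg h01, dif_pos h12, orientCocycle_eq_zero' (Or.inr (Or.inl h12)),
        wCochain, dif_pos h12, if_neg e12, wCochain, dif_neg h02, wCochain, dif_neg h01]
      ring
    · by_cases h20 : p g₂ = p g₀
      · have h02 : p g₀ = p g₂ := h20.symm
        rw [dif_neg h01, dif_neg h12, dif_pos h20,
          orientCocycle_eq_zero' (Or.inr (Or.inr h02)),
          wCochain, dif_neg h12, wCochain, dif_pos h02, if_neg e02, wCochain, dif_neg h01]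
        have hvi : kerElt p g₂ g₀ h20 = (kerElt p g₀ g₂ h02)⁻¹ := (kerElt_inv' p g₀ g₂ h02).symm
        rw [hvi]
        have hv1 : kerElt p g₀ g₂ h02 ≠ 1 := fun h => e02 ((kerElt_eq_one_iff' p g₀ g₂ h02).mp h)
        rcases hv1.lt_or_gt with hv | hv <;>
          simp [hinv' (kerElt p g₀ g₂ h02), hv, hv.not_gt]
      · have h02 : ¬ p g₀ = p g₂ := fun h => h20 h.symm
        rw [dif_neg h01, dif_neg h12, dif_neg h20,
          wCochain, dif_neg h12, wCochain, dif_neg h02, wCochain, dif_neg h01]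
        ring
end
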